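/- (Sample complexity for the population centroid in dsq_θ.) Let n ≥ 1, ε > 0, δ ∈ (0,1), let θ : Fin n → Fin n → ℝ satisfy θ i j > 0 for all i, j, and set ρ = max over all (i,j) of θ i j. Let μ be a probability measure on the space of matrices Fin n → Fin n → ℝ such that μ-almost every matrix A is binary, symmetric (A i j = A j i), and has unit diagonal (A i i = 1), and let A_pop i j = ∫ A i j dμ(A). Let T : ℕ satisfy (T : ℝ) ≥ (ρ * n^2 / ε) * Real.log (n/δ). Then under the T-fold product measure μ^{⊗T} (i.i.d. samples A₁, …, A_T), with probability at least 1 − δ the sample centroid Ā = (1/T) • ∑_t A t satisfies dsq_θ(Ā, A_pop) ≤ ε. -/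

import Mathlib

open Finset MeasureTheory

/-- The squared version dsq_θ of the weighted distance. -/
noncomputable def dsqTheta {n : ℕ} (θ A₁ A₂ : Fin n → Fin n → ℝ) : ℝ :=
  (1 / 2) * ∑ i : Fin n, ∑ j : Fin n, θ i j * (A₁ i j - A₂ i j) ^ 2

open ProbabilityTheory Real NNReal

/-!
Off the diagonal, each entry of the sample centroid is the mean of `T` independent `[0, 1]`-valued
variables, so by Hoeffding its squared error exceeds `r = 2ε / (ρ n²)` with probability at most
`2 exp (-2 T r)`; on the diagonal both centroids are `1` almost surely. Outside these `n² - n` bad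
events `dsq_θ ≤ ρ r (n² - n) / 2 ≤ ε`, and the bound on `T` gives `exp (-2 T r) ≤ (δ / n) ^ 4`,
so the union bound costs at most `2 (n² - n) (δ / n) ^ 4 ≤ δ`.
-/

lemma measure_abs_sum_sub_integral_ge_le_of_iIndepFun {Ω ι : Type*} {mΩ : MeasurableSpace Ω}
    {P : Measure Ω} [IsProbabilityMeasure P] {X : ι → Ω → ℝ} (h_indep : iIndepFun X P)
    (h_meas : ∀ i, Measurable (X i)) {a b : ℝ} (h_bdd : ∀ i, ∀ᵐ ω ∂P, X i ω ∈ Set.Icc a b)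
    (s : Finset ι) {ε : ℝ} (hε : 0 ≤ ε) :
    P.real {ω | ε ≤ |∑ i ∈ s, (X i ω - P[X i])|} ≤
      2 * exp (-2 * ε ^ 2 / (#s * (b - a) ^ 2)) := by
  have h_subG : ∀ i ∈ s, HasSubgaussianMGF (fun ω ↦ X i ω - P[X i]) ((‖b - a‖₊ / 2) ^ 2) P :=
    fun i _ ↦ hasSubgaussianMGF_of_mem_Icc (h_meas i).aemeasurable (h_bdd i)
  have h_indep_centered : iIndepFun (fun i ω ↦ X i ω - P[X i]) P :=
    (h_indep.comp (fun i x ↦ x - P[X i]) fun i ↦ measurable_id.sub_const P[X i] :)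
  have h_indep_neg : iIndepFun (fun i ω ↦ -(X i ω - P[X i])) P :=
    (h_indep.comp (fun i x ↦ -(x - P[X i])) fun i ↦ (measurable_id.sub_const P[X i]).neg :)
  have h_upper := HasSubgaussianMGF.measure_sum_ge_le_of_iIndepFun h_indep_centered h_subG hε
  have h_lower := HasSubgaussianMGF.measure_sum_ge_le_of_iIndepFun h_indep_neg
    (fun i hi ↦ (h_subG i hi).neg) hε
  have h_exponent : -ε ^ 2 / (2 * ∑ i ∈ s, ((‖b - a‖₊ / 2) ^ 2 : ℝ≥0)) =
      -2 * ε ^ 2 / (#s * (b - a) ^ 2) := by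
    simp only [sum_const, nsmul_eq_mul, NNReal.coe_mul, NNReal.coe_natCast, NNReal.coe_pow,
      NNReal.coe_div, coe_nnnorm, Real.norm_eq_abs, NNReal.coe_ofNat, div_pow, sq_abs]
    field_simp
  rw [h_exponent] at h_upper h_lower
  calc P.real {ω | ε ≤ |∑ i ∈ s, (X i ω - P[X i])|}
      = P.real ({ω | ε ≤ ∑ i ∈ s, (X i ω - P[X i])} ∪
          {ω | ε ≤ ∑ i ∈ s, -(X i ω - P[X i])}) := by
        congr 1; ext ω; simp only [Set.mem_ofPred_eq, Set.mem_union, le_abs, sum_neg_distrib]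
    _ ≤ _ := (measureReal_union_le _ _).trans (by linarith)

section IIDSample

variable {E : Type*} [MeasurableSpace E] {μ : Measure E} [IsProbabilityMeasure μ]

lemma ae_pi_forall_of_ae {ι : Type*} [Fintype ι] {q : E → Prop} (h : ∀ᵐ x ∂μ, q x) :
    ∀ᵐ ω ∂(Measure.pi fun _ : ι ↦ μ), ∀ t, q (ω t) :=
  ae_all_iff.2 fun t ↦ (measurePreserving_eval (fun _ ↦ μ) t).quasiMeasurePreserving.ae (p := q) h

variable {T : ℕ}

lemma measure_abs_sampleMean_sub_integral_ge_le {f : E → ℝ} (hf : Measurable f) {a b : ℝ}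
    (hf_bdd : ∀ᵐ x ∂μ, f x ∈ Set.Icc a b) (hT : 0 < T) {c : ℝ} (hc : 0 ≤ c) :
    (Measure.pi fun _ : Fin T ↦ μ).real {ω | c ≤ |(T : ℝ)⁻¹ * ∑ t, f (ω t) - ∫ x, f x ∂μ|} ≤
      2 * exp (-2 * T * c ^ 2 / (b - a) ^ 2) := by
  have hT' : (0 : ℝ) < T := by exact_mod_cast hT
  have h_indep : iIndepFun (fun t (ω : Fin T → E) ↦ f (ω t)) (Measure.pi fun _ ↦ μ) :=
    iIndepFun_pi fun _ ↦ hf.aemeasurable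
  have h_mean : ∀ t, ∫ ω, f (ω t) ∂(Measure.pi fun _ : Fin T ↦ μ) = ∫ x, f x ∂μ :=
    fun t ↦ integral_comp_eval hf.aestronglyMeasurable
  have h_hoeffding := measure_abs_sum_sub_integral_ge_le_of_iIndepFun h_indep
    (fun t ↦ hf.comp (measurable_pi_apply t)) (ae_all_iff.1 (ae_pi_forall_of_ae hf_bdd)) univ
    (mul_nonneg hT'.le hc)
  simp only [h_mean, card_univ, Fintype.card_fin, sum_sub_distrib, sum_const,
    nsmul_eq_mul] at h_hoeffding
  convert h_hoeffding using 3
  · ext ω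
    rw [← mul_le_mul_iff_right₀ hT', ← abs_of_pos hT', ← abs_mul, abs_of_pos hT', mul_sub,
      mul_inv_cancel_left₀ hT'.ne']
  · field_simp

end IIDSample

lemma ofReal_one_sub_le_of_ae_forall_notMem {Ω ι : Type*} {mΩ : MeasurableSpace Ω}
    {P : Measure Ω} [IsProbabilityMeasure P] {S : Set Ω} (s : Finset ι) (B : ι → Set Ω) {δ : ℝ}
    (hS : ∀ᵐ ω ∂P, (∀ q ∈ s, ω ∉ B q) → ω ∈ S) (hδ : ∑ q ∈ s, P.real (B q) ≤ δ) :
    ENNReal.ofReal (1 - δ) ≤ P S := by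
  have h_compl : P.real Sᶜ ≤ ∑ q ∈ s, P.real (B q) := by
    refine (ENNReal.toReal_mono (measure_ne_top _ _) (measure_mono_ae ?_)).trans
      (measureReal_biUnion_finset_le s B)
    filter_upwards [hS] with ω hω hωS
    by_contra hω_good
    exact hωS (hω fun q hq hωq ↦ hω_good (Set.mem_biUnion hq hωq))
  have h_cover : 1 ≤ P.real S + P.real Sᶜ := by
    simpa using measureReal_union_le (μ := P) S Sᶜ
  exact ENNReal.ofReal_le_of_le_toReal (by linarith : 1 - δ ≤ P.real S)

lemma dsqTheta_le_of_sq_sub_le_of_ne {n : ℕ} {θ A B : Fin n → Fin n → ℝ} {ρ r : ℝ}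
    (hθ : ∀ i j, 0 ≤ θ i j) (hθρ : ∀ i j, θ i j ≤ ρ) (hdiag : ∀ i, A i i = B i i)
    (hoff : ∀ i j, i ≠ j → (A i j - B i j) ^ 2 ≤ r) :
    dsqTheta θ A B ≤ ρ * r * (n ^ 2 - n) / 2 := by
  have hterm : ∀ i j, θ i j * (A i j - B i j) ^ 2 ≤ if i = j then 0 else ρ * r := by
    intro i j
    split_ifs with hij
    · simp [hij, hdiag]
    · exact mul_le_mul (hθρ i j) (hoff i j hij) (sq_nonneg _) ((hθ i j).trans (hθρ i j))
  have hcount : ∑ i : Fin n, ∑ j : Fin n, (if i = j then 0 else ρ * r) = ρ * r * (n ^ 2 - n) := by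
    have hsplit : ∀ i j : Fin n,
        (if i = j then 0 else ρ * r) = ρ * r - if i = j then ρ * r else 0 :=
      fun i j ↦ by split_ifs <;> ring
    simp only [hsplit, sum_sub_distrib, sum_const, sum_ite_eq, mem_univ, if_true, card_univ,
      Fintype.card_fin, nsmul_eq_mul]
    ring
  calc dsqTheta θ A B ≤ (1 / 2) * ∑ i : Fin n, ∑ j : Fin n, (if i = j then 0 else ρ * r) := by
        unfold dsqTheta
        gcongr with i _ j _
        exact hterm i j
    _ = ρ * r * (n ^ 2 - n) / 2 := by rw [hcount]; ring

lemma sq_sub_mul_two_mul_exp_le {n : ℕ} (hn : 1 ≤ n) {δ x : ℝ} (hδ : δ ∈ Set.Ioo (0 : ℝ) 1)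
    (hx : 4 * log (n / δ) ≤ x) : ((n : ℝ) ^ 2 - n) * (2 * exp (-x)) ≤ δ := by
  obtain ⟨hδ0, hδ1⟩ := hδ
  have hn' : (1 : ℝ) ≤ n := by exact_mod_cast hn
  have hexp : exp (-x) ≤ (δ / n) ^ 4 := by
    calc exp (-x) ≤ exp (-(4 * log (n / δ))) := exp_le_exp.2 (by linarith)
      _ = (δ / n) ^ 4 := by
        rw [neg_mul_eq_mul_neg, ← log_inv, inv_div, mul_comm, exp_mul, exp_log (by positivity)]
        norm_cast
  have hδ4 : δ ^ 4 ≤ δ := pow_le_of_le_one hδ0.le hδ1.le (by norm_num)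
  calc ((n : ℝ) ^ 2 - n) * (2 * exp (-x)) ≤ ((n : ℝ) ^ 2 - n) * (2 * (δ / n) ^ 4) := by
        gcongr
        nlinarith
    _ = 2 * (n - 1) / n ^ 3 * δ ^ 4 := by field_simp
    _ ≤ 1 * δ := by
        gcongr
        rw [div_le_one (by positivity)]
        -- `n ^ 3 - 2 * (n - 1) = (n - 1) ^ 2 * (n + 2) + n`
        nlinarith [mul_nonneg (sq_nonneg ((n : ℝ) - 1)) (by linarith : (0 : ℝ) ≤ n + 2)]
    _ = δ := one_mul δ

section Centroid

variable {n T : ℕ} {μ : Measure (Fin n → Fin n → ℝ)} [IsProbabilityMeasure μ]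

lemma measure_sq_centroid_apply_sub_integral_ge_le {i j : Fin n}
    (h01 : ∀ᵐ B ∂μ, B i j ∈ Set.Icc (0 : ℝ) 1) (hT : 0 < T) {r : ℝ} (hr : 0 ≤ r) :
    (Measure.pi fun _ : Fin T ↦ μ).real
        {A | r ≤ (((1 / (T : ℝ)) • ∑ t, A t) i j - ∫ B, B i j ∂μ) ^ 2} ≤
      2 * exp (-(2 * T * r)) := by
  have h := measure_abs_sampleMean_sub_integral_ge_le
    (f := fun B : Fin n → Fin n → ℝ ↦ B i j) (by fun_prop) h01 hT (sqrt_nonneg r)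
  simp only [sub_zero, one_pow, div_one, sq_sqrt hr, neg_mul] at h
  convert h using 3
  ext A
  simp only [Finset.sum_apply, Pi.smul_apply, smul_eq_mul, one_div]
  rw [sqrt_le_left (abs_nonneg _), sq_abs]

lemma ae_centroid_apply_self (hμ : ∀ᵐ B ∂μ, ∀ i, B i i = 1) (hT : 0 < T) :
    ∀ᵐ A ∂(Measure.pi fun _ : Fin T ↦ μ), ∀ i,
      ((1 / (T : ℝ)) • ∑ t, A t) i i = ∫ B, B i i ∂μ := by
  filter_upwards [ae_pi_forall_of_ae hμ] with A hA i
  rw [integral_congr_ae (hμ.mono fun B hB ↦ hB i)]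
  simp [Finset.sum_apply, hA, hT.ne']

end Centroid

/-- Sample complexity for the population centroid in dsq_θ: with
`T ≥ (ρ n² / ε) log(n/δ)` i.i.d. samples, where ρ is the maximum weight, with probability
at least 1 - δ the sample centroid is within ε of the population centroid in dsq_θ. -/
theorem centroid_sample_complexity_dsq (n : ℕ) (hn : 1 ≤ n)
    (ε δ : ℝ) (hε : 0 < ε) (hδ : δ ∈ Set.Ioo (0 : ℝ) 1)
    (θ : Fin n → Fin n → ℝ) (hθ : ∀ i j, 0 < θ i j) (ρ : ℝ)
    (hρ : ρ = ⨆ q : Fin n × Fin n, θ q.1 q.2)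
    (μ : Measure (Fin n → Fin n → ℝ)) [IsProbabilityMeasure μ]
    (hμ : ∀ᵐ A ∂μ, (∀ i j, A i j ∈ ({0, 1} : Set ℝ)) ∧
      (∀ i j, A i j = A j i) ∧ (∀ i, A i i = 1))
    (T : ℕ) (hT : (ρ * (n : ℝ) ^ 2 / ε) * Real.log ((n : ℝ) / δ) ≤ (T : ℝ)) :
    ENNReal.ofReal (1 - δ) ≤
      Measure.pi (fun _ : Fin T => μ)
        {A : Fin T → Fin n → Fin n → ℝ |
          dsqTheta θ ((1 / (T : ℝ)) • ∑ t : Fin T, A t)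
            (fun i j => ∫ B, B i j ∂μ) ≤ ε} := by
  have hθρ : ∀ i j, θ i j ≤ ρ := fun i j ↦
    hρ ▸ le_ciSup (f := fun q : Fin n × Fin n ↦ θ q.1 q.2) (Set.finite_range _).bddAbove (i, j)
  have hρ_pos : 0 < ρ := (hθ ⟨0, hn⟩ ⟨0, hn⟩).trans_le (hθρ _ _)
  have hlog_pos : 0 < log (n / δ) :=
    log_pos ((one_lt_div hδ.1).2 (hδ.2.trans_le (by exact_mod_cast hn)))
  have hT_pos : 0 < T := by exact_mod_cast (by positivity : (0 : ℝ) < _).trans_le hT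
  have h01 : ∀ i j, ∀ᵐ B ∂μ, B i j ∈ Set.Icc (0 : ℝ) 1 := fun i j ↦ by
    filter_upwards [hμ] with B hB
    obtain h | h : B i j = 0 ∨ B i j = 1 := hB.1 i j <;> simp [h]
  set r := 2 * ε / (ρ * n ^ 2)
  refine ofReal_one_sub_le_of_ae_forall_notMem (univ : Finset (Fin n)).offDiag
    (fun q ↦ {A | r ≤ (((1 / (T : ℝ)) • ∑ t, A t) q.1 q.2 - ∫ B, B q.1 q.2 ∂μ) ^ 2}) ?_ ?_
  · filter_upwards [ae_centroid_apply_self (hμ.mono fun _ hB ↦ hB.2.2) hT_pos] with A hA hnear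
    refine (dsqTheta_le_of_sq_sub_le_of_ne (fun i j ↦ (hθ i j).le) hθρ hA fun i j hij ↦
      (not_le.1 (hnear (i, j) (by simpa using hij))).le).trans ?_
    rw [div_le_iff₀ two_pos, mul_div_assoc', div_mul_eq_mul_div, div_le_iff₀ (by positivity)]
    nlinarith [mul_nonneg (mul_pos hε hρ_pos).le (Nat.cast_nonneg n : (0 : ℝ) ≤ n)]
  calc _ ≤ #(univ : Finset (Fin n)).offDiag • (2 * exp (-(2 * T * r))) :=
        sum_le_card_nsmul _ _ _ fun q _ ↦
          measure_sq_centroid_apply_sub_integral_ge_le (h01 _ _) hT_pos (by positivity)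
    _ = ((n : ℝ) ^ 2 - n) * (2 * exp (-(2 * T * r))) := by
        rw [nsmul_eq_mul, offDiag_card, card_univ, Fintype.card_fin,
          Nat.cast_sub (Nat.le_mul_self n), Nat.cast_mul]
        ring
    _ ≤ δ := by
        refine sq_sub_mul_two_mul_exp_le hn hδ ?_
        rw [div_mul_eq_mul_div, div_le_iff₀ hε] at hT
        rw [show 2 * (T : ℝ) * r = 4 * (T * ε) / (ρ * n ^ 2) by ring, le_div_iff₀ (by positivity)]
        linarith
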